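/- Let A and B be disjoint subsets of {1,…,p} with B nonempty and |A| + |B| ≤ 6s*. For j ∈ B let Ψ_j = Φ_{A∪{j}} − Φ_A. Then for every v ∈ ℝ^n, max_{j∈B} ‖Ψ_j v‖² ≥ ‖X_Bᵀ (I − Φ_A) v‖² / (|B| · n), where X_B is the n×|B| submatrix of X with columns (X_j : j ∈ B). -/

import Mathlib

open scoped BigOperators
open Finset

noncomputable section

/-- Span of the columns `X j`, `j ∈ S`. -/
def colSpan {n p : ℕ} (X : Fin p → EuclideanSpace ℝ (Fin n)) (S : Finset (Fin p)) :
    Submodule ℝ (EuclideanSpace ℝ (Fin n)) :=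
  Submodule.span ℝ (X '' ↑S)

/-- `Φ_S`, the orthogonal projection of ℝ^n onto the span of the columns in `S`. -/
noncomputable def proj {n p : ℕ} (X : Fin p → EuclideanSpace ℝ (Fin n)) (S : Finset (Fin p)) :
    EuclideanSpace ℝ (Fin n) →ₗ[ℝ] EuclideanSpace ℝ (Fin n) :=
  (colSpan X S).subtype ∘ₗ ((colSpan X S).orthogonalProjection).toLinearMap

/-- Restricted eigenvalue condition: `‖X_S w‖² ≥ n ν ‖w‖²` for all `S` with `|S| ≤ m`. -/
def RECond {n p : ℕ} (X : Fin p → EuclideanSpace ℝ (Fin n)) (ν : ℝ) (m : ℕ) : Prop :=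
  ∀ S : Finset (Fin p), S.card ≤ m → ∀ w : Fin p → ℝ,
    (n : ℝ) * ν * ∑ j ∈ S, w j ^ 2 ≤ ‖∑ j ∈ S, w j • X j‖ ^ 2

end

/-! Since `X j` lies in the span of the columns in `A ∪ {j}`, the residual `v - Φ_{A∪{j}} v` is
orthogonal to it, so `⟪X j, (I - Φ_A) v⟫ = ⟪X j, Ψ_j v⟫`. Cauchy–Schwarz with `‖X j‖² = n` bounds
its square by `n ‖Ψ_j v‖² ≤ n max_{j ∈ B} ‖Ψ_j v‖²`, and summing over the `|B|` indices gives the claim. -/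

theorem Submodule.sq_inner_sub_le_of_mem {E : Type*} [NormedAddCommGroup E] [InnerProductSpace ℝ E]
    (K : Submodule ℝ E) [K.HasOrthogonalProjection] {x : E} (hx : x ∈ K) (v u : E) :
    inner ℝ x (v - u) ^ 2 ≤ ‖x‖ ^ 2 * ‖K.starProjection v - u‖ ^ 2 := by
  have hres : inner ℝ x (v - K.starProjection v) = 0 := by
    rw [real_inner_comm]
    exact K.starProjection_inner_eq_zero v x hx
  have hsplit : v - u = (v - K.starProjection v) + (K.starProjection v - u) := by abel
  rw [hsplit, inner_add_right, hres, zero_add, ← sq_abs, ← mul_pow]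
  exact pow_le_pow_left₀ (abs_nonneg _) (abs_real_inner_le_norm _ _) 2

theorem proj_apply {n p : ℕ} (X : Fin p → EuclideanSpace ℝ (Fin n)) (S : Finset (Fin p))
    (v : EuclideanSpace ℝ (Fin n)) : proj X S v = (colSpan X S).starProjection v :=
  rfl

theorem mem_colSpan {n p : ℕ} (X : Fin p → EuclideanSpace ℝ (Fin n)) {S : Finset (Fin p)}
    {j : Fin p} (hj : j ∈ S) : X j ∈ colSpan X S :=
  Submodule.subset_span ⟨j, hj, rfl⟩

theorem sq_inner_sub_proj_le {n p : ℕ} (X : Fin p → EuclideanSpace ℝ (Fin n))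
    (A : Finset (Fin p)) (j : Fin p) (v : EuclideanSpace ℝ (Fin n)) :
    inner ℝ (X j) (v - proj X A v) ^ 2 ≤
      ‖X j‖ ^ 2 * ‖proj X (insert j A) v - proj X A v‖ ^ 2 := by
  rw [proj_apply X (insert j A)]
  exact (colSpan X (insert j A)).sq_inner_sub_le_of_mem (mem_colSpan X (mem_insert_self j A)) _ _

theorem stmt4_general {n p : ℕ}
    (X : Fin p → EuclideanSpace ℝ (Fin n))
    (hX : ∀ j, ‖X j‖ = Real.sqrt n)
    (A B : Finset (Fin p)) (hB : B.Nonempty)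
    (v : EuclideanSpace ℝ (Fin n)) :
    (∑ j ∈ B, (inner ℝ (X j) (v - proj X A v) : ℝ) ^ 2) / ((B.card : ℝ) * n) ≤
      B.sup' hB fun j => ‖proj X (insert j A) v - proj X A v‖ ^ 2 := by
  set m := B.sup' hB fun j => ‖proj X (insert j A) v - proj X A v‖ ^ 2
  have hle_m : ∀ j ∈ B, ‖proj X (insert j A) v - proj X A v‖ ^ 2 ≤ m := fun j hj =>
    le_sup' (fun j => ‖proj X (insert j A) v - proj X A v‖ ^ 2) hj
  have hm : 0 ≤ m := (sq_nonneg _).trans (hle_m _ hB.choose_spec)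
  have hterm : ∀ j ∈ B, inner ℝ (X j) (v - proj X A v) ^ 2 ≤ n * m := fun j hj =>
    calc inner ℝ (X j) (v - proj X A v) ^ 2
        ≤ ‖X j‖ ^ 2 * ‖proj X (insert j A) v - proj X A v‖ ^ 2 := sq_inner_sub_proj_le X A j v
      _ ≤ n * m := by
        rw [hX j, Real.sq_sqrt n.cast_nonneg]
        exact mul_le_mul_of_nonneg_left (hle_m j hj) n.cast_nonneg
  refine div_le_of_le_mul₀ (by positivity) hm ?_
  calc ∑ j ∈ B, inner ℝ (X j) (v - proj X A v) ^ 2 ≤ B.card • (n * m) :=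
        sum_le_card_nsmul _ _ _ hterm
    _ = m * (B.card * n) := by rw [nsmul_eq_mul]; ring

/-- with Ψ_j = Φ_{A∪{j}} − Φ_A, for every v,
max_{j∈B} ‖Ψ_j v‖² ≥ ‖X_Bᵀ(I−Φ_A)v‖²/(|B|·n). -/
theorem stmt4 {n p s : ℕ} (hn : 0 < n) (hp : 0 < p) (hs : 0 < s)
    (X : Fin p → EuclideanSpace ℝ (Fin n))
    (hX : ∀ j, ‖X j‖ = Real.sqrt n)
    {ν : ℝ} (hν : 0 < ν) (hRE : RECond X ν (6 * s))
    (A B : Finset (Fin p)) (hdisj : Disjoint A B) (hB : B.Nonempty)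
    (hcard : A.card + B.card ≤ 6 * s)
    (v : EuclideanSpace ℝ (Fin n)) :
    (∑ j ∈ B, (inner ℝ (X j) (v - proj X A v) : ℝ) ^ 2) / ((B.card : ℝ) * n) ≤
      B.sup' hB fun j => ‖proj X (insert j A) v - proj X A v‖ ^ 2 :=
  stmt4_general X hX A B hB v
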